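/- arXiv:1002.1765 — 6 statements merged into one kernel-verified Lean document; each statement's English description precedes it below -/
import Mathlib

section
/- Let Ω be a Polish space and let 𝒫 be a nonempty set of Borel probability measures on Ω that is compact in the topology of weak convergence of measures. Let X, Y : Ω → ℝ be Borel measurable functions, integrable with respect to every P ∈ 𝒫, with sup_{P∈𝒫} E_P[|X|] < ∞ and sup_{P∈𝒫} E_P[|Y|] < ∞, and such that the difference X − Y is quasi-continuous. If X ≤ Y quasi-surely (i.e. v({X > Y}) = 0) and inf_{P∈𝒫} P({X < Y}) > 0, then sup_{P∈𝒫} E_P[X] < sup_{P∈𝒫} E_P[Y]. -/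
/-!
Let `φ = min ((Y - X)⁺, 1)`. Off an open set of small capacity `φ` is continuous, so by Tietze
it agrees there with a bounded continuous function taking values in `[0, 1]`; hence
`P ↦ E_P[φ]` is a uniform limit on `𝔓` of weakly continuous functions. It therefore attains
its minimum `δ` on the compact set `𝔓` at some `Q`, and `δ > 0` because `Q (X < Y) > 0`.
As `φ ≤ Y - X` quasi-surely, `E_P[X] + δ ≤ E_P[Y]` for every `P ∈ 𝔓`.
-/

open MeasureTheory Set
open scoped NNReal BoundedContinuousFunction

theorem ContinuousOn.exists_boundedContinuous_eqOn_of_mapsTo_Icc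
    {Ω : Type*} [TopologicalSpace Ω] [NormalSpace Ω] {f : Ω → ℝ} {s : Set Ω} {a b : ℝ}
    (hs : IsClosed s) (hf : ContinuousOn f s) (hfs : MapsTo f s (Icc a b)) (hab : a ≤ b) :
    ∃ g : Ω →ᵇ ℝ, (∀ ω, g ω ∈ Icc a b) ∧ EqOn g f s := by
  let f' : s →ᵇ ℝ := .mkOfBound ⟨s.domRestrict f, hf.domRestrict⟩ (b - a)
    fun x y ↦ Real.dist_le_of_mem_Icc (hfs x.2) (hfs y.2)
  obtain ⟨g, hg, hgf⟩ :=
    BoundedContinuousFunction.exists_extension_forall_mem_Icc_of_isClosedEmbedding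
      f' (fun x ↦ hfs x.2) hab hs.isClosedEmbedding_subtypeVal
  exact ⟨g, hg, fun ω hω ↦ congrFun hgf ⟨ω, hω⟩⟩

theorem abs_integral_sub_le_of_eqOn_compl {Ω : Type*} [MeasurableSpace Ω] {μ : Measure Ω}
    [IsFiniteMeasure μ] {f g : Ω → ℝ} {s : Set Ω} {C : ℝ} (hf : Integrable f μ)
    (hg : Integrable g μ) (hfg : EqOn f g sᶜ) (hC : ∀ ω, |f ω - g ω| ≤ C) :
    |∫ ω, f ω ∂μ - ∫ ω, g ω ∂μ| ≤ C * μ.real s := by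
  rw [← integral_sub hf hg, ← setIntegral_eq_integral_of_forall_compl_eq_zero
    fun ω hω ↦ sub_eq_zero.mpr (hfg hω)]
  exact norm_setIntegral_le_of_norm_le_const (measure_lt_top μ s)
    fun ω _ ↦ (Real.norm_eq_abs _).trans_le (hC ω)

namespace MeasureTheory.ProbabilityMeasure

variable {Ω : Type*} [MeasurableSpace Ω]

theorem apply_le_iSup_of_mem {𝔓 : Set (ProbabilityMeasure Ω)} {P : ProbabilityMeasure Ω}
    (hP : P ∈ 𝔓) (s : Set Ω) : P s ≤ ⨆ Q : 𝔓, (Q : ProbabilityMeasure Ω) s :=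
  le_ciSup (f := fun Q : 𝔓 ↦ (Q : ProbabilityMeasure Ω) s)
    ⟨1, by rintro _ ⟨Q, rfl⟩; exact apply_le_one _ _⟩ ⟨P, hP⟩

theorem toMeasure_apply_eq_zero_of_iSup_eq_zero {𝔓 : Set (ProbabilityMeasure Ω)} {s : Set Ω}
    (hs : ⨆ Q : 𝔓, (Q : ProbabilityMeasure Ω) s = 0) {P : ProbabilityMeasure Ω} (hP : P ∈ 𝔓) :
    (P : Measure Ω) s = 0 :=
  (null_iff_toMeasure_null P s).mp (nonpos_iff_eq_zero.mp (hs ▸ apply_le_iSup_of_mem hP s))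

end MeasureTheory.ProbabilityMeasure

open ProbabilityMeasure

section QuasiContinuous

variable {Ω : Type*} [TopologicalSpace Ω] [MeasurableSpace Ω]

/-- Quasi-continuity with respect to the capacity `s ↦ ⨆ P ∈ 𝔓, P s`. -/
def QuasiContinuous {β : Type*} [TopologicalSpace β] (𝔓 : Set (ProbabilityMeasure Ω))
    (f : Ω → β) : Prop :=
  ∀ ε : ℝ≥0, 0 < ε → ∃ O : Set Ω, IsOpen O ∧
    (⨆ P : 𝔓, (P : ProbabilityMeasure Ω) O) < ε ∧ ContinuousOn f Oᶜ

variable {𝔓 : Set (ProbabilityMeasure Ω)}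

theorem QuasiContinuous.comp {β γ : Type*} [TopologicalSpace β] [TopologicalSpace γ]
    {f : Ω → β} {g : β → γ} (hf : QuasiContinuous 𝔓 f) (hg : Continuous g) :
    QuasiContinuous 𝔓 (g ∘ f) := fun ε hε ↦
  (hf ε hε).imp fun _ ⟨hO, hOε, hfO⟩ ↦ ⟨hO, hOε, hg.comp_continuousOn hfO⟩

variable [NormalSpace Ω] [OpensMeasurableSpace Ω]

theorem QuasiContinuous.exists_boundedContinuous_integral_approx {f : Ω → ℝ} {a b : ℝ}
    (hf : QuasiContinuous 𝔓 f) (hfm : Measurable f) (hfab : ∀ ω, f ω ∈ Icc a b) (hab : a ≤ b)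
    {ε : ℝ} (hε : 0 < ε) :
    ∃ g : Ω →ᵇ ℝ, ∀ P ∈ 𝔓,
      |∫ ω, g ω ∂(P : Measure Ω) - ∫ ω, f ω ∂(P : Measure Ω)| ≤ (b - a) * ε := by
  obtain ⟨O, hO, hOε, hfO⟩ := hf ε.toNNReal (Real.toNNReal_pos.mpr hε)
  obtain ⟨g, hgab, hgf⟩ :=
    hfO.exists_boundedContinuous_eqOn_of_mapsTo_Icc hO.isClosed_compl (fun ω _ ↦ hfab ω) hab
  refine ⟨g, fun P hP ↦ ?_⟩
  have hPO : (P : Measure Ω).real O ≤ ε := by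
    rw [measureReal_eq_coe_coeFn, ← Real.coe_toNNReal ε hε.le, NNReal.coe_le_coe]
    exact ((apply_le_iSup_of_mem hP O).trans_lt hOε).le
  have hfint : Integrable f (P : Measure Ω) :=
    .of_mem_Icc a b hfm.aemeasurable (.of_forall hfab)
  calc |∫ ω, g ω ∂(P : Measure Ω) - ∫ ω, f ω ∂(P : Measure Ω)|
      ≤ (b - a) * (P : Measure Ω).real O :=
        abs_integral_sub_le_of_eqOn_compl (g.integrable _) hfint hgf
          fun ω ↦ abs_sub_le_of_le_of_le (hgab ω).1 (hgab ω).2 (hfab ω).1 (hfab ω).2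
    _ ≤ (b - a) * ε := by gcongr

theorem QuasiContinuous.continuousOn_integral {f : Ω → ℝ} {a b : ℝ}
    (hf : QuasiContinuous 𝔓 f) (hfm : Measurable f) (hfab : ∀ ω, f ω ∈ Icc a b) (hab : a ≤ b) :
    ContinuousOn (fun P : ProbabilityMeasure Ω ↦ ∫ ω, f ω ∂(P : Measure Ω)) 𝔓 := by
  refine continuousOn_of_uniform_approx_of_continuousOn fun u hu ↦ ?_
  obtain ⟨η, hη, hηu⟩ := Metric.mem_uniformity_dist.mp hu
  have hε : 0 < η / (b - a + 1) := by positivity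
  obtain ⟨g, hg⟩ := hf.exists_boundedContinuous_integral_approx hfm hfab hab hε
  refine ⟨fun P ↦ ∫ ω, g ω ∂(P : Measure Ω),
    (continuous_integral_boundedContinuousFunction g).continuousOn, fun P hP ↦ hηu ?_⟩
  rw [Real.dist_eq, abs_sub_comm]
  calc _ ≤ (b - a) * (η / (b - a + 1)) := hg P hP
    _ < η := by rw [mul_div_assoc', div_lt_iff₀ (by linarith)]; nlinarith

end QuasiContinuous

theorem ciSup_add_le_ciSup {ι : Type*} [Nonempty ι] {f g : ι → ℝ} {δ : ℝ}
    (hg : BddAbove (range g)) (hfg : ∀ i, f i + δ ≤ g i) : (⨆ i, f i) + δ ≤ ⨆ i, g i :=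
  le_sub_iff_add_le.mp <| ciSup_le fun i ↦ le_sub_iff_add_le.mpr <| (hfg i).trans (le_ciSup hg i)

theorem strict_comparison_general
    {Ω : Type*} [TopologicalSpace Ω] [PolishSpace Ω] [MeasurableSpace Ω] [BorelSpace Ω]
    (𝔓 : Set (ProbabilityMeasure Ω)) (h𝔓ne : 𝔓.Nonempty) (h𝔓cpt : IsCompact 𝔓)
    (X Y : Ω → ℝ) (hXmeas : Measurable X) (hYmeas : Measurable Y)
    (hXint : ∀ P ∈ 𝔓, Integrable X (P : Measure Ω))
    (hYint : ∀ P ∈ 𝔓, Integrable Y (P : Measure Ω))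
    (hYbdd : BddAbove (Set.range fun P : 𝔓 => ∫ ω, |Y ω| ∂((P : ProbabilityMeasure Ω) : Measure Ω)))
    (hqc : ∀ ε : ℝ≥0, 0 < ε → ∃ O : Set Ω, IsOpen O ∧
      (⨆ P : 𝔓, (P : ProbabilityMeasure Ω) O) < ε ∧
      ContinuousOn (fun ω => X ω - Y ω) Oᶜ)
    (hqs : (⨆ P : 𝔓, (P : ProbabilityMeasure Ω) {ω | Y ω < X ω}) = 0)
    (hinf : 0 < ⨅ P : 𝔓, (P : ProbabilityMeasure Ω) {ω | X ω < Y ω}) :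
    (⨆ P : 𝔓, ∫ ω, X ω ∂((P : ProbabilityMeasure Ω) : Measure Ω)) <
      ⨆ P : 𝔓, ∫ ω, Y ω ∂((P : ProbabilityMeasure Ω) : Measure Ω) := by
  set φ : Ω → ℝ := fun ω ↦ min (max (Y ω - X ω) 0) 1
  have hφ01 : ∀ ω, φ ω ∈ Icc 0 1 :=
    fun ω ↦ ⟨le_min (le_max_right _ _) zero_le_one, min_le_right _ _⟩
  have hφm : Measurable φ := by fun_prop
  have hφint (P : ProbabilityMeasure Ω) : Integrable φ (P : Measure Ω) :=
    .of_mem_Icc 0 1 hφm.aemeasurable (.of_forall hφ01)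
  have hφqc : QuasiContinuous 𝔓 φ := by
    simpa only [Function.comp_def, neg_sub] using
      (show QuasiContinuous 𝔓 fun ω ↦ X ω - Y ω from hqc).comp
        (g := fun t ↦ min (max (-t) 0) 1) (by fun_prop)
  obtain ⟨Q, hQ, hQmin⟩ :=
    h𝔓cpt.exists_isMinOn h𝔓ne (hφqc.continuousOn_integral hφm hφ01 zero_le_one)
  have hδ : 0 < ∫ ω, φ ω ∂(Q : Measure Ω) := by
    rw [integral_pos_iff_support_of_nonneg (fun ω ↦ (hφ01 ω).1) (hφint Q)]
    have hQpos : 0 < (Q : Measure Ω) {ω | X ω < Y ω} := by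
      have := hinf.trans_le (ciInf_le (OrderBot.bddBelow _) ⟨Q, hQ⟩)
      simpa only [pos_iff_ne_zero, ne_eq, null_iff_toMeasure_null] using this
    refine hQpos.trans_le (measure_mono fun ω (hω : X ω < Y ω) ↦ ?_)
    exact (lt_min (lt_max_of_lt_left (sub_pos.mpr hω)) zero_lt_one).ne'
  have hgap : ∀ P ∈ 𝔓, ∫ ω, X ω ∂(P : Measure Ω) + ∫ ω, φ ω ∂(Q : Measure Ω)
      ≤ ∫ ω, Y ω ∂(P : Measure Ω) := by
    intro P hP
    have hQP : ∫ ω, φ ω ∂(Q : Measure Ω) ≤ ∫ ω, φ ω ∂(P : Measure Ω) := hQmin hP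
    have hXY : ∀ᵐ ω ∂(P : Measure Ω), X ω ≤ Y ω :=
      ae_iff.mpr (by simpa only [not_le] using toMeasure_apply_eq_zero_of_iSup_eq_zero hqs hP)
    have hφ_le : ∫ ω, φ ω ∂(P : Measure Ω) ≤ ∫ ω, Y ω - X ω ∂(P : Measure Ω) :=
      integral_mono_ae (hφint P) ((hYint P hP).sub (hXint P hP))
        (hXY.mono fun ω h ↦ (min_le_left _ _).trans (max_eq_left (sub_nonneg.mpr h)).le)
    rw [integral_sub (hYint P hP) (hXint P hP)] at hφ_le
    linarith
  have hYbdd' : BddAbove (range fun P : 𝔓 ↦ ∫ ω, Y ω ∂(P : Measure Ω)) :=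
    hYbdd.range_mono _ fun P ↦ (le_abs_self _).trans abs_integral_le_integral_abs
  have := h𝔓ne.to_subtype
  linarith [ciSup_add_le_ciSup hYbdd' fun P : 𝔓 ↦ hgap P P.2]

/-- **Strict comparison theorem (Theorem 3.1).** Let `Ω` be a Polish space and `𝔓` a nonempty
weakly compact set of Borel probability measures on `Ω`.  Let `X, Y : Ω → ℝ` be Borel measurable,
integrable w.r.t. every `P ∈ 𝔓`, with `sup_{P ∈ 𝔓} E_P[|X|] < ∞` and
`sup_{P ∈ 𝔓} E_P[|Y|] < ∞`, and such that `X - Y` is quasi-continuous.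
If `X ≤ Y` quasi-surely (i.e. `v(X > Y) = 0`) and `inf_{P ∈ 𝔓} P(X < Y) > 0`, then
`sup_{P ∈ 𝔓} E_P[X] < sup_{P ∈ 𝔓} E_P[Y]`. -/
theorem strict_comparison
    {Ω : Type*} [TopologicalSpace Ω] [PolishSpace Ω] [MeasurableSpace Ω] [BorelSpace Ω]
    (𝔓 : Set (ProbabilityMeasure Ω)) (h𝔓ne : 𝔓.Nonempty) (h𝔓cpt : IsCompact 𝔓)
    (X Y : Ω → ℝ) (hXmeas : Measurable X) (hYmeas : Measurable Y)
    (hXint : ∀ P ∈ 𝔓, Integrable X (P : Measure Ω))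
    (hYint : ∀ P ∈ 𝔓, Integrable Y (P : Measure Ω))
    (hXbdd : BddAbove (Set.range fun P : 𝔓 => ∫ ω, |X ω| ∂((P : ProbabilityMeasure Ω) : Measure Ω)))
    (hYbdd : BddAbove (Set.range fun P : 𝔓 => ∫ ω, |Y ω| ∂((P : ProbabilityMeasure Ω) : Measure Ω)))
    (hqc : ∀ ε : ℝ≥0, 0 < ε → ∃ O : Set Ω, IsOpen O ∧
      (⨆ P : 𝔓, (P : ProbabilityMeasure Ω) O) < ε ∧
      ContinuousOn (fun ω => X ω - Y ω) Oᶜ)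
    (hqs : (⨆ P : 𝔓, (P : ProbabilityMeasure Ω) {ω | Y ω < X ω}) = 0)
    (hinf : 0 < ⨅ P : 𝔓, (P : ProbabilityMeasure Ω) {ω | X ω < Y ω}) :
    (⨆ P : 𝔓, ∫ ω, X ω ∂((P : ProbabilityMeasure Ω) : Measure Ω)) <
      ⨆ P : 𝔓, ∫ ω, Y ω ∂((P : ProbabilityMeasure Ω) : Measure Ω) :=
  strict_comparison_general 𝔓 h𝔓ne h𝔓cpt X Y hXmeas hYmeas hXint hYint hYbdd hqc hqs hinf
end

section
/- Let Ω be a Polish space and let 𝒫 be a nonempty set of Borel probability measures on Ω that is compact in the topology of weak convergence of measures. Let Z : Ω → ℝ be a Borel measurable, quasi-continuous function that is integrable with respect to every P ∈ 𝒫 with sup_{P∈𝒫} E_P[|Z|] < ∞. If Z ≤ 0 quasi-surely (i.e. v({Z > 0}) = 0) and inf_{P∈𝒫} P({Z < 0}) > 0, then sup_{P∈𝒫} E_P[Z] < 0. -/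
/-!
Truncate `Z` to `V := max (min Z 0) (-1)`. Quasi-continuity lets one approximate the bounded
function `V` uniformly over `𝔓` (via Tietze) by bounded continuous functions, whose integrals are
weakly continuous; hence `P ↦ E_P[V]` is continuous on the compact set `𝔓` and attains its
supremum at some `P₀ ∈ 𝔓`. Since `Z ≤ V` quasi-surely, `sup_P E_P[Z] ≤ E_{P₀}[V]`, and
`E_{P₀}[V] < 0` because `V ≤ 0` with `{V ≠ 0} = {Z < 0}` of positive `P₀`-measure.
-/

open MeasureTheory Set
open scoped NNReal BoundedContinuousFunction

lemma norm_integral_sub_le_of_eqOn_compl {α E : Type*} [MeasurableSpace α]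
    [NormedAddCommGroup E] [NormedSpace ℝ E] {μ : Measure α} [IsFiniteMeasure μ]
    {f g : α → E} {s : Set α} {C : ℝ} (hf : Integrable f μ) (hg : Integrable g μ)
    (hfg : EqOn f g sᶜ) (hC : ∀ x ∈ s, ‖f x - g x‖ ≤ C) :
    ‖∫ x, f x ∂μ - ∫ x, g x ∂μ‖ ≤ C * μ.real s := by
  rw [← integral_sub hf hg,
    ← setIntegral_eq_integral_of_forall_compl_eq_zero fun x hx => sub_eq_zero.2 (hfg hx)]
  exact norm_setIntegral_le_of_norm_le_const (measure_lt_top μ s) hC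

lemma integral_neg_of_nonpos_of_support_ne_zero {α : Type*} [MeasurableSpace α]
    {μ : Measure α} {f : α → ℝ} (hf : f ≤ 0) (hfi : Integrable f μ)
    (hsupp : μ (Function.support f) ≠ 0) : ∫ x, f x ∂μ < 0 := by
  have := (integral_pos_iff_support_of_nonneg (neg_nonneg.2 hf) hfi.neg).2
    (by rwa [Function.support_neg, pos_iff_ne_zero])
  simpa [integral_neg] using this

lemma exists_boundedContinuousFunction_eqOn {X : Type*} [TopologicalSpace X] [NormalSpace X]
    {K : Set X} (hK : IsClosed K) {f : X → ℝ} (hf : ContinuousOn f K) {C : ℝ} (hC : 0 ≤ C)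
    (hbd : ∀ x ∈ K, |f x| ≤ C) : ∃ g : X →ᵇ ℝ, EqOn g f K ∧ ∀ x, |g x| ≤ C := by
  obtain ⟨g, hgC, hgf⟩ := ContinuousMap.exists_restrict_eq_forall_mem_of_closed
    ⟨K.domRestrict f, hf.domRestrict⟩ (t := Icc (-C) C) (fun x => abs_le.1 (hbd x x.2))
    ⟨0, by simpa using hC⟩ hK
  refine ⟨.ofNormedAddCommGroup g g.continuous C fun x => abs_le.2 (hgC x),
    fun x hx => DFunLike.congr_fun hgf ⟨x, hx⟩, fun x => abs_le.2 (hgC x)⟩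

lemma support_max_min_zero_neg_one {α : Type*} (f : α → ℝ) :
    Function.support (fun x => max (min (f x) 0) (-1)) = {x | f x < 0} := by
  ext x
  simp only [Function.mem_support, mem_ofPred_eq]
  rcases lt_or_ge (f x) 0 with h | h
  · simp [h, min_eq_left h.le, (max_lt h (by norm_num : (-1 : ℝ) < 0)).ne]
  · simp [min_eq_right h, h.not_gt]

section Capacity

variable {Ω : Type*} [MeasurableSpace Ω]

noncomputable def capacity (𝔓 : Set (ProbabilityMeasure Ω)) (A : Set Ω) : ℝ≥0 :=
  ⨆ P : 𝔓, (P : ProbabilityMeasure Ω) A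

lemma apply_le_capacity {𝔓 : Set (ProbabilityMeasure Ω)} {P : ProbabilityMeasure Ω}
    (hP : P ∈ 𝔓) (A : Set Ω) : P A ≤ capacity 𝔓 A :=
  le_ciSup (f := fun Q : 𝔓 => (Q : ProbabilityMeasure Ω) A)
    ⟨1, by rintro _ ⟨Q, rfl⟩; exact Q.1.apply_le_one A⟩ ⟨P, hP⟩

lemma ae_of_capacity_eq_zero {𝔓 : Set (ProbabilityMeasure Ω)} {P : ProbabilityMeasure Ω}
    (hP : P ∈ 𝔓) {p : Ω → Prop} (h : capacity 𝔓 {ω | ¬ p ω} = 0) :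
    ∀ᵐ ω ∂(P : Measure Ω), p ω := by
  refine ae_iff.2 ((ProbabilityMeasure.null_iff_toMeasure_null P _).1 ?_)
  exact le_antisymm ((apply_le_capacity hP _).trans h.le) bot_le

variable [TopologicalSpace Ω]

def IsQuasiContinuous (𝔓 : Set (ProbabilityMeasure Ω)) (f : Ω → ℝ) : Prop :=
  ∀ ε : ℝ≥0, 0 < ε → ∃ O : Set Ω, IsOpen O ∧ capacity 𝔓 O < ε ∧ ContinuousOn f Oᶜ

lemma IsQuasiContinuous.comp {𝔓 : Set (ProbabilityMeasure Ω)} {f : Ω → ℝ} {φ : ℝ → ℝ}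
    (hφ : Continuous φ) (hf : IsQuasiContinuous 𝔓 f) : IsQuasiContinuous 𝔓 (φ ∘ f) :=
  fun ε hε => (hf ε hε).imp fun _ ⟨hO, hOε, hfO⟩ => ⟨hO, hOε, hφ.comp_continuousOn hfO⟩

lemma IsQuasiContinuous.continuousOn_integral [OpensMeasurableSpace Ω] [NormalSpace Ω]
    {𝔓 : Set (ProbabilityMeasure Ω)} {f : Ω → ℝ} (hf : IsQuasiContinuous 𝔓 f)
    (hmeas : Measurable f) {C : ℝ} (hbd : ∀ x, |f x| ≤ C) :
    ContinuousOn (fun P : ProbabilityMeasure Ω => ∫ x, f x ∂(P : Measure Ω)) 𝔓 := by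
  obtain ⟨C, hC, hbd⟩ : ∃ C, 0 ≤ C ∧ ∀ x, |f x| ≤ C :=
    ⟨max C 0, le_max_right _ _, fun x => (hbd x).trans (le_max_left _ _)⟩
  refine continuousOn_of_uniform_approx_of_continuousOn fun u hu => ?_
  obtain ⟨ε, hε, hεu⟩ := Metric.mem_uniformity_dist.1 hu
  have hC' : 0 < 2 * C + 1 := by linarith
  obtain ⟨O, hO, hOδ, hfO⟩ := hf ⟨ε / (2 * C + 1), by positivity⟩
    (NNReal.coe_pos.1 (div_pos hε hC'))
  obtain ⟨g, hgf, hgC⟩ :=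
    exists_boundedContinuousFunction_eqOn hO.isClosed_compl hfO hC fun x _ => hbd x
  refine ⟨fun P => ∫ x, g x ∂(P : Measure Ω),
    (ProbabilityMeasure.continuous_integral_boundedContinuousFunction g).continuousOn,
    fun P hP => hεu ?_⟩
  have hPO : (P : Measure Ω).real O < ε / (2 * C + 1) := by
    rw [ProbabilityMeasure.measureReal_eq_coe_coeFn]
    exact NNReal.coe_lt_coe.2 ((apply_le_capacity hP O).trans_lt hOδ)
  calc dist (∫ x, f x ∂(P : Measure Ω)) (∫ x, g x ∂(P : Measure Ω))
      ≤ (2 * C + 1) * (P : Measure Ω).real O := by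
        rw [dist_eq_norm]
        refine norm_integral_sub_le_of_eqOn_compl
          (.of_bound hmeas.aestronglyMeasurable C (.of_forall hbd)) (g.integrable _)
          (fun x hx => (hgf hx).symm) fun x _ => ?_
        rw [Real.norm_eq_abs]
        linarith [abs_sub (f x) (g x), hbd x, hgC x]
    _ < (2 * C + 1) * (ε / (2 * C + 1)) := by gcongr
    _ = ε := mul_div_cancel₀ ε hC'.ne'

end Capacity

theorem strict_comparison_special_case_general
    {Ω : Type*} [TopologicalSpace Ω] [PolishSpace Ω] [MeasurableSpace Ω] [BorelSpace Ω]
    (𝔓 : Set (ProbabilityMeasure Ω)) (h𝔓ne : 𝔓.Nonempty) (h𝔓cpt : IsCompact 𝔓)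
    (Z : Ω → ℝ) (hZmeas : Measurable Z)
    (hZint : ∀ P ∈ 𝔓, Integrable Z (P : Measure Ω))
    (hqc : ∀ ε : ℝ≥0, 0 < ε → ∃ O : Set Ω, IsOpen O ∧
      (⨆ P : 𝔓, (P : ProbabilityMeasure Ω) O) < ε ∧ ContinuousOn Z Oᶜ)
    (hqs : (⨆ P : 𝔓, (P : ProbabilityMeasure Ω) {ω | 0 < Z ω}) = 0)
    (hinf : 0 < ⨅ P : 𝔓, (P : ProbabilityMeasure Ω) {ω | Z ω < 0}) :
    (⨆ P : 𝔓, ∫ ω, Z ω ∂((P : ProbabilityMeasure Ω) : Measure Ω)) < 0 := by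
  set V : Ω → ℝ := fun ω => max (min (Z ω) 0) (-1)
  have hV_nonpos : V ≤ 0 := fun ω => max_le (min_le_right _ _) (by norm_num)
  have hV_abs : ∀ ω, |V ω| ≤ 1 := fun ω =>
    abs_le.2 ⟨le_max_right _ _, (hV_nonpos ω).trans zero_le_one⟩
  have hV_int : ∀ P : ProbabilityMeasure Ω, Integrable V (P : Measure Ω) := fun P =>
    .of_bound (by fun_prop) 1 (.of_forall hV_abs)
  have hV_qc : IsQuasiContinuous 𝔓 V :=
    IsQuasiContinuous.comp (f := Z) (φ := fun x => max (min x 0) (-1)) (by fun_prop) hqc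
  obtain ⟨P₀, hP₀, hP₀_max⟩ :=
    h𝔓cpt.exists_isMaxOn h𝔓ne (hV_qc.continuousOn_integral (by fun_prop) hV_abs)
  have hZ_le_V : ∀ P ∈ 𝔓, ∫ ω, Z ω ∂(P : Measure Ω) ≤ ∫ ω, V ω ∂(P : Measure Ω) := by
    intro P hP
    refine integral_mono_ae (hZint P hP) (hV_int P) ?_
    have hZ_nonpos : capacity 𝔓 {ω | ¬ Z ω ≤ 0} = 0 := by simp only [not_le]; exact hqs
    filter_upwards [ae_of_capacity_eq_zero hP hZ_nonpos] with ω hω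
    simp [V, hω]
  have hV_neg : ∫ ω, V ω ∂(P₀ : Measure Ω) < 0 := by
    refine integral_neg_of_nonpos_of_support_ne_zero hV_nonpos (hV_int P₀) ?_
    rw [support_max_min_zero_neg_one Z]
    refine mt (ProbabilityMeasure.null_iff_toMeasure_null _ _).2 ?_
    exact (hinf.trans_le (ciInf_le (OrderBot.bddBelow _) ⟨P₀, hP₀⟩)).ne'
  have : Nonempty 𝔓 := h𝔓ne.to_subtype
  exact lt_of_le_of_lt (ciSup_le fun P : 𝔓 => (hZ_le_V P P.2).trans (hP₀_max P.2)) hV_neg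

/-- **Strict comparison (Theorem 3.1, special case).** Let `Ω` be a Polish space and `𝔓` a
nonempty weakly compact set of Borel probability measures on `Ω`.  Let `Z : Ω → ℝ` be Borel
measurable, quasi-continuous, integrable w.r.t. every `P ∈ 𝔓`, with
`sup_{P ∈ 𝔓} E_P[|Z|] < ∞`.  If `Z ≤ 0` quasi-surely and `inf_{P ∈ 𝔓} P(Z < 0) > 0`,
then `sup_{P ∈ 𝔓} E_P[Z] < 0`. -/
theorem strict_comparison_special_case
    {Ω : Type*} [TopologicalSpace Ω] [PolishSpace Ω] [MeasurableSpace Ω] [BorelSpace Ω]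
    (𝔓 : Set (ProbabilityMeasure Ω)) (h𝔓ne : 𝔓.Nonempty) (h𝔓cpt : IsCompact 𝔓)
    (Z : Ω → ℝ) (hZmeas : Measurable Z)
    (hZint : ∀ P ∈ 𝔓, Integrable Z (P : Measure Ω))
    (hZbdd : BddAbove (Set.range fun P : 𝔓 => ∫ ω, |Z ω| ∂((P : ProbabilityMeasure Ω) : Measure Ω)))
    (hqc : ∀ ε : ℝ≥0, 0 < ε → ∃ O : Set Ω, IsOpen O ∧
      (⨆ P : 𝔓, (P : ProbabilityMeasure Ω) O) < ε ∧ ContinuousOn Z Oᶜ)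
    (hqs : (⨆ P : 𝔓, (P : ProbabilityMeasure Ω) {ω | 0 < Z ω}) = 0)
    (hinf : 0 < ⨅ P : 𝔓, (P : ProbabilityMeasure Ω) {ω | Z ω < 0}) :
    (⨆ P : 𝔓, ∫ ω, Z ω ∂((P : ProbabilityMeasure Ω) : Measure Ω)) < 0 :=
  strict_comparison_special_case_general 𝔓 h𝔓ne h𝔓cpt Z hZmeas hZint hqc hqs hinf
end

section
/- Let Ω be a measurable space and let 𝒫 be a nonempty set of probability measures on Ω. Let X, Y : Ω → ℝ be measurable functions, integrable with respect to every P ∈ 𝒫, with sup_{P∈𝒫} E_P[X] and sup_{P∈𝒫} E_P[Y] finite. Assume X ≤ Y quasi-surely (i.e. v({X > Y}) = 0), that v({X < Y}) > 0, and that X has mean certainty, i.e. sup_{P∈𝒫} E_P[X] = −sup_{P∈𝒫} E_P[−X] (equivalently, sup_{P∈𝒫} E_P[X] = inf_{P∈𝒫} E_P[X]). Then sup_{P∈𝒫} E_P[X] < sup_{P∈𝒫} E_P[Y]. -/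
open MeasureTheory Set
open scoped ENNReal

theorem integral_lt_integral_of_ae_le_of_measure_setOf_lt_pos {α : Type*} [MeasurableSpace α]
    {μ : Measure α} {f g : α → ℝ} (hf : Integrable f μ) (hg : Integrable g μ) (hfg : f ≤ᵐ[μ] g)
    (hlt : 0 < μ {x | f x < g x}) :
    ∫ x, f x ∂μ < ∫ x, g x ∂μ := by
  have hpos : 0 < ∫ x, (g - f) x ∂μ := by
    refine (integral_pos_iff_support_of_nonneg_ae ?_ (hg.sub hf)).2 ?_
    · filter_upwards [hfg] with x hx using sub_nonneg.2 hx
    · exact hlt.trans_le (measure_mono fun x hx => sub_ne_zero.2 (ne_of_gt hx))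
  rw [integral_sub' hg hf] at hpos
  linarith

theorem ciSup_le_apply_of_ciSup_eq_neg_ciSup_neg {ι : Sort*} {f : ι → ℝ}
    (hbdd : BddAbove (range fun i => -f i)) (hf : ⨆ i, f i = -⨆ i, -f i) (i : ι) :
    ⨆ i, f i ≤ f i := by
  rw [hf, neg_le]
  exact le_ciSup hbdd i

theorem strict_comparison_mean_certainty_general
    {Ω : Type*} [MeasurableSpace Ω]
    (𝔓 : Set (Measure Ω))
    (X Y : Ω → ℝ)
    (hXint : ∀ P ∈ 𝔓, Integrable X P)
    (hYint : ∀ P ∈ 𝔓, Integrable Y P)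
    (hYbdd : BddAbove (Set.range fun P : 𝔓 => ∫ ω, Y ω ∂(P : Measure Ω)))
    (hnegXbdd : BddAbove (Set.range fun P : 𝔓 => ∫ ω, -X ω ∂(P : Measure Ω)))
    (hqs : (⨆ P ∈ 𝔓, P {ω | Y ω < X ω}) = 0)
    (hv : 0 < ⨆ P ∈ 𝔓, P {ω | X ω < Y ω})
    (hcert : (⨆ P : 𝔓, ∫ ω, X ω ∂(P : Measure Ω)) =
      - ⨆ P : 𝔓, ∫ ω, -X ω ∂(P : Measure Ω)) :
    (⨆ P : 𝔓, ∫ ω, X ω ∂(P : Measure Ω)) < ⨆ P : 𝔓, ∫ ω, Y ω ∂(P : Measure Ω) := by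
  obtain ⟨P₀, hP₀, hpos⟩ := lt_biSup_iff.1 hv
  have hnull : P₀ {ω | Y ω < X ω} = 0 := iSup₂_eq_bot.1 hqs P₀ hP₀
  have hle : X ≤ᵐ[P₀] Y := ae_iff.2 (by simpa only [not_le] using hnull)
  simp_rw [integral_neg] at hnegXbdd hcert
  calc ⨆ P : 𝔓, ∫ ω, X ω ∂(P : Measure Ω)
      ≤ ∫ ω, X ω ∂P₀ := ciSup_le_apply_of_ciSup_eq_neg_ciSup_neg hnegXbdd hcert ⟨P₀, hP₀⟩
    _ < ∫ ω, Y ω ∂P₀ := integral_lt_integral_of_ae_le_of_measure_setOf_lt_pos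
        (hXint P₀ hP₀) (hYint P₀ hP₀) hle hpos
    _ ≤ ⨆ P : 𝔓, ∫ ω, Y ω ∂(P : Measure Ω) := le_ciSup hYbdd ⟨P₀, hP₀⟩

/-- **Strict comparison theorem under mean certainty (Theorem 3.6).** Let `Ω` be a measurable
space and `𝔓` a nonempty set of probability measures on `Ω`.  Let `X, Y : Ω → ℝ` be measurable,
integrable w.r.t. every `P ∈ 𝔓`, with `sup_{P ∈ 𝔓} E_P[X]` and `sup_{P ∈ 𝔓} E_P[Y]` finite.
If `X ≤ Y` quasi-surely (i.e. `v(X > Y) = 0`), `v(X < Y) > 0`, and `X` has mean certainty,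
i.e. `sup_{P ∈ 𝔓} E_P[X] = - sup_{P ∈ 𝔓} E_P[-X]`, then
`sup_{P ∈ 𝔓} E_P[X] < sup_{P ∈ 𝔓} E_P[Y]`. -/
theorem strict_comparison_mean_certainty
    {Ω : Type*} [MeasurableSpace Ω]
    (𝔓 : Set (Measure Ω)) (h𝔓ne : 𝔓.Nonempty) (hprob : ∀ P ∈ 𝔓, IsProbabilityMeasure P)
    (X Y : Ω → ℝ) (hXmeas : Measurable X) (hYmeas : Measurable Y)
    (hXint : ∀ P ∈ 𝔓, Integrable X P)
    (hYint : ∀ P ∈ 𝔓, Integrable Y P)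
    (hXbdd : BddAbove (Set.range fun P : 𝔓 => ∫ ω, X ω ∂(P : Measure Ω)))
    (hYbdd : BddAbove (Set.range fun P : 𝔓 => ∫ ω, Y ω ∂(P : Measure Ω)))
    (hnegXbdd : BddAbove (Set.range fun P : 𝔓 => ∫ ω, -X ω ∂(P : Measure Ω)))
    (hqs : (⨆ P ∈ 𝔓, P {ω | Y ω < X ω}) = 0)
    (hv : 0 < ⨆ P ∈ 𝔓, P {ω | X ω < Y ω})
    (hcert : (⨆ P : 𝔓, ∫ ω, X ω ∂(P : Measure Ω)) =
      - ⨆ P : 𝔓, ∫ ω, -X ω ∂(P : Measure Ω)) :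
    (⨆ P : 𝔓, ∫ ω, X ω ∂(P : Measure Ω)) < ⨆ P : 𝔓, ∫ ω, Y ω ∂(P : Measure Ω) :=
  strict_comparison_mean_certainty_general 𝔓 X Y hXint hYint hYbdd hnegXbdd hqs hv hcert
end

section
/- Let 0 < σ̲ ≤ σ̄ and define G(α) := (σ̄² α⁺ − σ̲² α⁻)/2 for α ∈ ℝ. Let T > 0 and let u : [0,T] × ℝ → ℝ be bounded and continuous, once continuously differentiable in t and twice continuously differentiable in x on (0,T) × ℝ, satisfying ∂_t u(t,x) − G(∂_xx u(t,x)) = 0 for all (t,x) ∈ (0,T) × ℝ. If u(0,x) ≤ 0 for all x ∈ ℝ, then u(t,x) ≤ 0 for all (t,x) ∈ [0,T] × ℝ. -/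
open Set Filter Topology

lemma aux_left_deriv (g : ℝ → ℝ) (a t0 d : ℝ) (hd : HasDerivAt g d t0)
    (ha : a < t0) (hmax : ∀ t ∈ Icc a t0, g t ≤ g t0) : 0 ≤ d := by
  have hs : Tendsto (slope g t0) (𝓝[≠] t0) (𝓝 d) := hasDerivAt_iff_tendsto_slope.1 hd
  have hsub : Ico a t0 ⊆ {t0}ᶜ := fun x hx => (ne_of_lt hx.2)
  have hs' : Tendsto (slope g t0) (𝓝[Ico a t0] t0) (𝓝 d) :=
    hs.mono_left (nhdsWithin_mono _ hsub)
  have hne : (𝓝[Ico a t0] t0).NeBot := by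
    refine mem_closure_iff_nhdsWithin_neBot.mp ?_
    rw [closure_Ico ha.ne]
    exact ⟨ha.le, le_refl _⟩
  refine ge_of_tendsto hs' ?_
  filter_upwards [self_mem_nhdsWithin] with t ht
  have h1 : g t - g t0 ≤ 0 := by linarith [hmax t ⟨ht.1, ht.2.le⟩]
  have h2 : t - t0 < 0 := by linarith [ht.2]
  rw [slope_def_field, div_nonneg_iff]
  right
  constructor <;> linarith

/-- Second derivative test at a global maximum. -/
lemma aux_second_deriv (f f' : ℝ → ℝ) (b x0 : ℝ)
    (hf' : ∀ x, HasDerivAt f (f' x) x) (hf'' : HasDerivAt f' b x0)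
    (hmax : ∀ x, f x ≤ f x0) : b ≤ 0 := by
  by_contra hb
  push_neg at hb
  have hf'0 : f' x0 = 0 :=
    (IsLocalMax.hasDerivAt_eq_zero (Filter.Eventually.of_forall hmax) (hf' x0))
  have hs : Tendsto (slope f' x0) (𝓝[≠] x0) (𝓝 b) := hasDerivAt_iff_tendsto_slope.1 hf''
  have hev : ∀ᶠ x in 𝓝[≠] x0, slope f' x0 x ∈ Ioi (b/2) :=
    hs.eventually_mem (Ioi_mem_nhds (half_lt_self hb))
  rw [eventually_nhdsWithin_iff, Metric.eventually_nhds_iff] at hev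
  obtain ⟨δ, hδ, hball⟩ := hev
  have hy : x0 < x0 + δ/2 := by linarith
  have hpos : ∀ c ∈ Ioo x0 (x0 + δ/2), 0 < f' c := by
    intro c hc
    have hdist : dist c x0 < δ := by
      rw [Real.dist_eq, abs_of_pos (by linarith [hc.1])]
      linarith [hc.2]
    have h := hball hdist (ne_of_gt hc.1)
    rw [mem_Ioi, slope_def_field, hf'0, sub_zero] at h
    have hc0 : 0 < c - x0 := by linarith [hc.1]
    rw [lt_div_iff₀ hc0] at h
    nlinarith [mul_pos (half_pos hb) hc0]
  obtain ⟨c, hc, hcslope⟩ := exists_hasDerivAt_eq_slope f f' hy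
    (fun x _ => (hf' x).continuousAt.continuousWithinAt) (fun x hx => hf' x)
  have h1 : 0 < f' c := hpos c hc
  have h2 : f' c * (δ/2) = f (x0 + δ/2) - f x0 := by
    have hδ' : x0 + δ/2 - x0 = δ/2 := by ring
    rw [hcslope, hδ', div_mul_cancel₀]
    positivity
  have := hmax (x0 + δ/2)
  nlinarith [mul_pos h1 (half_pos hδ)]

/-- **Maximum principle for the `G`-heat equation on a strip.**
Let `0 < σ̲ ≤ σ̄` and `G(α) = (σ̄² α⁺ - σ̲² α⁻)/2`.  Let `T > 0` and let `u` be a bounded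
classical solution of `∂ₜ u - G(∂ₓₓ u) = 0` on `(0,T) × ℝ`, continuous on `[0,T] × ℝ`.
If `u(0,x) ≤ 0` for all `x`, then `u ≤ 0` on `[0,T] × ℝ`. -/
theorem G_heat_maximum_principle
    (σl σb : ℝ) (hσl : 0 < σl) (hσ : σl ≤ σb) (T : ℝ) (hT : 0 < T)
    (u ut ux uxx : ℝ → ℝ → ℝ)
    (hubd : ∃ M : ℝ, ∀ t ∈ Set.Icc (0 : ℝ) T, ∀ x : ℝ, |u t x| ≤ M)
    (hucont : ContinuousOn (fun p : ℝ × ℝ => u p.1 p.2) (Set.Icc 0 T ×ˢ Set.univ))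
    (hderiv : ∀ t ∈ Set.Ioo (0 : ℝ) T, ∀ x : ℝ,
      HasDerivAt (fun s => u s x) (ut t x) t ∧
      HasDerivAt (fun y => u t y) (ux t x) x ∧
      HasDerivAt (fun y => ux t y) (uxx t x) x)
    (hutcont : ContinuousOn (fun p : ℝ × ℝ => ut p.1 p.2) (Set.Ioo 0 T ×ˢ Set.univ))
    (huxcont : ContinuousOn (fun p : ℝ × ℝ => ux p.1 p.2) (Set.Ioo 0 T ×ˢ Set.univ))
    (huxxcont : ContinuousOn (fun p : ℝ × ℝ => uxx p.1 p.2) (Set.Ioo 0 T ×ˢ Set.univ))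
    (hpde : ∀ t ∈ Set.Ioo (0 : ℝ) T, ∀ x : ℝ,
      ut t x - (σb ^ 2 * max (uxx t x) 0 - σl ^ 2 * max (-(uxx t x)) 0) / 2 = 0)
    (hinit : ∀ x : ℝ, u 0 x ≤ 0) :
    ∀ t ∈ Set.Icc (0 : ℝ) T, ∀ x : ℝ, u t x ≤ 0 := by
  obtain ⟨M, hM⟩ := hubd
  have hM0 : 0 ≤ M := le_trans (abs_nonneg _) (hM 0 ⟨le_refl _, hT.le⟩ 0)
  set C : ℝ := σb ^ 2 + 1 with hC
  have hCpos : 0 < C := by positivity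
  -- Key step: for each ε > 0 and T' < T, u ≤ ε(x² + C t) on [0,T'] × ℝ.
  have key : ∀ ε : ℝ, 0 < ε → ∀ T' : ℝ, 0 < T' → T' < T → ∀ t ∈ Icc (0:ℝ) T', ∀ x : ℝ,
      u t x ≤ ε * (x ^ 2 + C * t) := by
    intro ε hε T' hT'0 hT'T
    set R : ℝ := Real.sqrt ((2 * M + 1) / ε) with hRdef
    have hRnn : 0 ≤ R := Real.sqrt_nonneg _
    have hR2 : ε * R ^ 2 = 2 * M + 1 := by
      rw [hRdef, Real.sq_sqrt (by positivity)]
      field_simp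
    set φ : ℝ × ℝ → ℝ := fun p => u p.1 p.2 - ε * (p.2 ^ 2 + C * p.1) with hφ
    set S : Set (ℝ × ℝ) := Icc (0:ℝ) T' ×ˢ Icc (-R) R with hS
    have hScomp : IsCompact S := isCompact_Icc.prod isCompact_Icc
    have hSsub : S ⊆ Icc 0 T ×ˢ (univ : Set ℝ) := by
      rintro ⟨t, x⟩ ⟨ht, hx⟩
      exact ⟨⟨ht.1, ht.2.trans hT'T.le⟩, mem_univ _⟩
    have hφcont : ContinuousOn φ S := by
      apply (hucont.mono hSsub).sub
      fun_prop
    have h00 : ((0:ℝ), (0:ℝ)) ∈ S :=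
      ⟨⟨le_refl _, hT'0.le⟩, ⟨neg_nonpos.mpr hRnn, hRnn⟩⟩
    obtain ⟨p0, hp0S, hp0max⟩ := hScomp.exists_isMaxOn ⟨_, h00⟩ hφcont
    obtain ⟨ht0mem, hx0mem⟩ := hp0S
    -- the maximum over the compact set is a maximum over the whole strip
    have hA : ∀ t ∈ Icc (0:ℝ) T', ∀ x : ℝ, φ (t, x) ≤ φ p0 := by
      intro t ht x
      by_cases hx : |x| ≤ R
      · exact hp0max (Set.mk_mem_prod ht (abs_le.mp hx))
      · push_neg at hx
        have hu : u t x ≤ M := (abs_le.mp (hM t ⟨ht.1, ht.2.trans hT'T.le⟩ x)).2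
        have hx2 : R ^ 2 ≤ x ^ 2 := by nlinarith [abs_nonneg x, sq_abs x]
        have hct : 0 ≤ ε * (C * t) := by
          have := ht.1
          positivity
        have h1 : φ (t, x) ≤ M - (2 * M + 1) := by
          simp only [hφ]
          have : ε * R ^ 2 ≤ ε * x ^ 2 := by nlinarith
          nlinarith
        have h2 : -M ≤ φ (0, 0) := by
          have := (abs_le.mp (hM 0 ⟨le_refl _, hT.le⟩ 0)).1
          simp only [hφ]
          nlinarith
        calc φ (t, x) ≤ M - (2 * M + 1) := h1
          _ ≤ -M := by linarith
          _ ≤ φ (0, 0) := h2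
          _ ≤ φ p0 := hp0max h00
    -- the maximum is attained at time 0
    have ht0 : p0.1 = 0 := by
      by_contra ht0ne
      have ht0pos : 0 < p0.1 := lt_of_le_of_ne ht0mem.1 (Ne.symm ht0ne)
      have ht0Ioo : p0.1 ∈ Ioo (0:ℝ) T := ⟨ht0pos, lt_of_le_of_lt ht0mem.2 hT'T⟩
      -- second derivative test in x
      have hxx : uxx p0.1 p0.2 ≤ 2 * ε := by
        have hb := aux_second_deriv (fun y => u p0.1 y - ε * y ^ 2)
          (fun y => ux p0.1 y - ε * (2 * y)) (uxx p0.1 p0.2 - ε * 2) p0.2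
          (fun y => by
            have h2 : HasDerivAt (fun y : ℝ => ε * y ^ 2) (ε * (2 * y)) y := by
              simpa using (hasDerivAt_pow 2 y).const_mul ε
            exact ((hderiv p0.1 ht0Ioo y).2.1).sub h2)
          (by
            have h2 : HasDerivAt (fun y : ℝ => ε * (2 * y)) (ε * 2) p0.2 := by
              have := (hasDerivAt_id p0.2).const_mul (ε * 2)
              simpa [mul_assoc] using this
            exact ((hderiv p0.1 ht0Ioo p0.2).2.2).sub h2)
          (fun y => by
            have h := hA p0.1 ht0mem y
            simp only [hφ] at h
            show u p0.1 y - ε * y ^ 2 ≤ u p0.1 p0.2 - ε * p0.2 ^ 2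
            nlinarith [h])
        linarith
      -- time derivative is nonnegative at the maximum
      have hdt : HasDerivAt (fun s => u s p0.2 - ε * (p0.2 ^ 2 + C * s))
          (ut p0.1 p0.2 - ε * C) p0.1 := by
        have h2 : HasDerivAt (fun s : ℝ => ε * (p0.2 ^ 2 + C * s)) (ε * C) p0.1 := by
          have := ((hasDerivAt_id p0.1).const_mul C).const_add (p0.2 ^ 2)
          have h3 := this.const_mul ε
          simpa [mul_assoc] using h3
        exact ((hderiv p0.1 ht0Ioo p0.2).1).sub h2
      have hut : 0 ≤ ut p0.1 p0.2 - ε * C := by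
        apply aux_left_deriv _ 0 p0.1 _ hdt ht0pos
        intro t ht
        have h := hA t ⟨ht.1, ht.2.trans ht0mem.2⟩ p0.2
        simp only [hφ] at h
        linarith
      -- contradiction with the PDE
      have hpde0 := hpde p0.1 ht0Ioo p0.2
      have hmax1 : max (uxx p0.1 p0.2) 0 ≤ 2 * ε := max_le hxx (by linarith)
      have hmax2 : 0 ≤ max (-(uxx p0.1 p0.2)) 0 := le_max_right _ _
      nlinarith [mul_le_mul_of_nonneg_left hmax1 (sq_nonneg σb),
        mul_nonneg (sq_nonneg σl) hmax2]
    -- conclude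
    intro t ht x
    have h1 := hA t ht x
    have h2 : u p0.1 p0.2 - ε * (p0.2 ^ 2 + C * p0.1) ≤ 0 := by
      rw [ht0]
      nlinarith [sq_nonneg p0.2, hinit p0.2]
    simp only [hφ] at h1
    linarith
  -- Step 2: u ≤ 0 on [0,T) × ℝ
  have step2 : ∀ t, 0 ≤ t → t < T → ∀ x : ℝ, u t x ≤ 0 := by
    intro t ht0 htT x
    set T' : ℝ := (t + T) / 2 with hT'
    have hT'0 : 0 < T' := by positivity
    have hT'T : T' < T := by simp only [hT']; linarith
    have htT' : t ≤ T' := by simp only [hT']; linarith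
    have hK : 0 ≤ x ^ 2 + C * t := by positivity
    by_contra hpos
    push_neg at hpos
    have hε : 0 < u t x / (2 * (x ^ 2 + C * t + 1)) := by positivity
    have := key _ hε T' hT'0 hT'T t ⟨ht0, htT'⟩ x
    have hstep : u t x / (2 * (x ^ 2 + C * t + 1)) * (x ^ 2 + C * t) ≤ u t x / 2 := by
      rw [div_mul_eq_mul_div, div_le_div_iff₀ (by positivity) (by norm_num)]
      nlinarith
    linarith
  -- Step 3: conclude, including t = T by continuity
  intro t ht x
  rcases eq_or_lt_of_le ht.2 with hteq | htlt
  · -- t = T : use continuity in time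
    subst hteq
    have hcont : ContinuousWithinAt (fun s => u s x) (Icc 0 t) t := by
      have h1 : ContinuousOn (fun s : ℝ => u s x) (Icc 0 t) := by
        have : (fun s : ℝ => u s x) = (fun p : ℝ × ℝ => u p.1 p.2) ∘ (fun s => (s, x)) := rfl
        rw [this]
        apply hucont.comp (by fun_prop)
        intro s hs
        exact ⟨hs, mem_univ _⟩
      exact h1 t ⟨ht.1, le_refl _⟩
    have hcont' : Tendsto (fun s => u s x) (𝓝[Ico 0 t] t) (𝓝 (u t x)) :=
      hcont.mono_left (nhdsWithin_mono _ Ico_subset_Icc_self)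
    have hne : (𝓝[Ico 0 t] t).NeBot := by
      refine mem_closure_iff_nhdsWithin_neBot.mp ?_
      rw [closure_Ico hT.ne]
      exact ⟨hT.le, le_refl _⟩
    refine le_of_tendsto hcont' ?_
    filter_upwards [self_mem_nhdsWithin] with s hs
    exact step2 s hs.1 hs.2 x
  · exact step2 t ht.1 htlt x
end

section
/- Let Ω be a metric space and let 𝒫 be a nonempty set of Borel probability measures on Ω that is compact in the topology of weak convergence of measures. Let (F_n) be a decreasing sequence of closed subsets of Ω with intersection F = ⋂_n F_n. Then sup_{P∈𝒫} P(F_n) decreases to sup_{P∈𝒫} P(F) as n → ∞, i.e. v(F_n) ↓ v(F). -/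
/-!
By the portmanteau theorem `P ↦ P(C)` is upper semicontinuous for closed `C`, so on the compact
set `𝔓` each `v(Fₙ)` is attained and the sets `{P ∈ 𝔓 | P(Fₙ) ≥ infₘ v(Fₘ)}` form a decreasing
sequence of nonempty closed sets. Any `P` in their intersection has
`P(F) = infₙ P(Fₙ) ≥ infₙ v(Fₙ)` by continuity from above, and `v(F) ≤ infₙ v(Fₙ)` is clear.
-/

open MeasureTheory Set Filter
open scoped NNReal Topology ENNReal

theorem CompactSpace.iInf_iSup_eq_iSup_iInf_of_upperSemicontinuous
    {X β ι : Type*} [TopologicalSpace X] [CompactSpace X] [Nonempty X]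
    [ConditionallyCompleteLinearOrderBot β] [Preorder ι] [IsDirectedOrder ι] [Nonempty ι]
    {f : ι → X → β} (hf : ∀ i, UpperSemicontinuous (f i)) (hanti : Antitone f) :
    ⨅ i, ⨆ x, f i x = ⨆ x, ⨅ i, f i x := by
  have hbdd : ∀ i, BddAbove (range (f i)) := fun i => by
    simpa only [image_univ] using
      ((hf i).upperSemicontinuousOn univ).bddAbove_of_isCompact isCompact_univ
  have hinf_le : ∀ i x, ⨅ j, f j x ≤ f i x := fun i x => ciInf_le (OrderBot.bddBelow _) i
  set L := ⨅ i, ⨆ x, f i x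
  set S : ι → Set X := fun i => f i ⁻¹' Ici L
  have hS_closed : ∀ i, IsClosed (S i) := fun i => (hf i).isClosed_preimage L
  have hS_nonempty : ∀ i, (S i).Nonempty := fun i => by
    obtain ⟨x, -, hx⟩ :=
      ((hf i).upperSemicontinuousOn univ).exists_isMaxOn univ_nonempty isCompact_univ
    exact ⟨x, (ciInf_le (OrderBot.bddBelow _) i).trans (ciSup_le fun y => hx (mem_univ y))⟩
  have hS_anti : Antitone S := fun i j hij x hx => le_trans hx (hanti hij x)
  obtain ⟨x, hx⟩ := IsCompact.nonempty_iInter_of_directed_nonempty_isCompact_isClosed S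
    hS_anti.directed_ge hS_nonempty (fun i => (hS_closed i).isCompact) hS_closed
  obtain ⟨i₀⟩ := ‹Nonempty ι›
  obtain ⟨b, hb⟩ := hbdd i₀
  have hbdd_inf : BddAbove (range fun x => ⨅ i, f i x) :=
    ⟨b, forall_mem_range.2 fun y => (hinf_le i₀ y).trans (hb (mem_range_self y))⟩
  refine le_antisymm (le_ciSup_of_le hbdd_inf x (le_ciInf fun i => mem_iInter.1 hx i)) ?_
  exact ciSup_le fun y => le_ciInf fun i => (hinf_le i y).trans (le_ciSup (hbdd i) y)

theorem ProbabilityMeasure.apply_iInter_of_antitone {Ω ι : Type*} [MeasurableSpace Ω]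
    [Preorder ι] [IsDirectedOrder ι] [(atTop : Filter ι).IsCountablyGenerated] [Nonempty ι]
    (μ : ProbabilityMeasure Ω) {s : ι → Set Ω} (hs : Antitone s)
    (hsm : ∀ i, NullMeasurableSet (s i) (μ : Measure Ω)) :
    μ (⋂ i, s i) = ⨅ i, μ (s i) := by
  apply ENNReal.coe_injective
  simp only [ENNReal.coe_iInf, ProbabilityMeasure.ennreal_coeFn_eq_coeFn_toMeasure]
  exact hs.measure_iInter hsm ⟨Classical.arbitrary ι, measure_ne_top _ _⟩

theorem ProbabilityMeasure.upperSemicontinuous_apply_of_isClosed {Ω : Type*}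
    [MeasurableSpace Ω] [TopologicalSpace Ω] [OpensMeasurableSpace Ω] [HasOuterApproxClosed Ω]
    {F : Set Ω} (hF : IsClosed F) :
    UpperSemicontinuous fun μ : ProbabilityMeasure Ω => μ F := by
  have hE : UpperSemicontinuous fun μ : ProbabilityMeasure Ω => (μ : Measure Ω) F :=
    upperSemicontinuous_iff_limsup_le.2 fun μ =>
      ProbabilityMeasure.limsup_measure_closed_le_of_tendsto tendsto_id hF
  refine upperSemicontinuous_iff_isClosed_preimage.2 fun r => ?_
  convert hE.isClosed_preimage (r : ℝ≥0∞) using 1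
  ext μ
  simp only [mem_preimage, mem_Ici, ← ProbabilityMeasure.ennreal_coeFn_eq_coeFn_toMeasure,
    ENNReal.coe_le_coe]

/-- **Huber–Strassen continuity from above of the capacity along closed sets.**
Let `Ω` be a metric space and `𝔓` a nonempty weakly compact set of Borel probability
measures on `Ω`.  If `(Fₙ)` is a decreasing sequence of closed sets with intersection `F`,
then `v(Fₙ) := sup_{P ∈ 𝔓} P(Fₙ)` decreases to `v(F) = sup_{P ∈ 𝔓} P(F)`. -/
theorem capacity_tendsto_of_closed_antitone
    {Ω : Type*} [MetricSpace Ω] [MeasurableSpace Ω] [BorelSpace Ω]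
    (𝔓 : Set (ProbabilityMeasure Ω)) (h𝔓ne : 𝔓.Nonempty) (h𝔓cpt : IsCompact 𝔓)
    (F : ℕ → Set Ω) (hFclosed : ∀ n, IsClosed (F n)) (hFanti : Antitone F) :
    Antitone (fun n => ⨆ P : 𝔓, (P : ProbabilityMeasure Ω) (F n)) ∧
    Tendsto (fun n => ⨆ P : 𝔓, (P : ProbabilityMeasure Ω) (F n)) atTop
      (𝓝 (⨆ P : 𝔓, (P : ProbabilityMeasure Ω) (⋂ n, F n))) := by
  have : CompactSpace 𝔓 := isCompact_iff_compactSpace.1 h𝔓cpt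
  have : Nonempty 𝔓 := h𝔓ne.to_subtype
  set f : ℕ → 𝔓 → ℝ≥0 := fun n P => (P : ProbabilityMeasure Ω) (F n)
  have hf_anti : Antitone f := fun m n hmn P => P.1.apply_mono (hFanti hmn)
  have hv_anti : Antitone fun n => ⨆ P, f n P := fun m n hmn =>
    ciSup_mono ⟨1, forall_mem_range.2 fun P => P.1.apply_le_one _⟩ (hf_anti hmn)
  have hf_usc : ∀ n, UpperSemicontinuous (f n) := fun n =>
    (ProbabilityMeasure.upperSemicontinuous_apply_of_isClosed (hFclosed n)).comp
      continuous_subtype_val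
  have hlim : ⨅ n, ⨆ P, f n P = ⨆ P : 𝔓, (P : ProbabilityMeasure Ω) (⋂ n, F n) := by
    simp only [CompactSpace.iInf_iSup_eq_iSup_iInf_of_upperSemicontinuous hf_usc hf_anti, f,
      ProbabilityMeasure.apply_iInter_of_antitone _ hFanti
        fun n => (hFclosed n).measurableSet.nullMeasurableSet]
  exact ⟨hv_anti, hlim ▸ tendsto_atTop_ciInf hv_anti (OrderBot.bddBelow _)⟩
end

section
/- Let Ω be a Polish space and let 𝒫 be a nonempty set of Borel probability measures on Ω that is compact in the topology of weak convergence of measures. Let X : Ω → ℝ be a Borel measurable, quasi-continuous function with inf_{P∈𝒫} P({X < 0}) > 0. Then there exists δ > 0 such that sup_{P∈𝒫} P({X ≥ −δ}) < 1. -/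
/-!
Let `c = inf_P P(X < 0)` and pick an open `O` of capacity `< c / 2` off which `X` is continuous.
Since `Oᶜ` is closed, the sets `O ∪ {X < -1/(n+1)}` are open; they increase to a set containing
`{X < 0}`. By the portmanteau theorem `P ↦ P G` is lower semicontinuous for open `G`, so
compactness of `𝔓` yields one `n` with `P (O ∪ {X < -1/(n+1)}) > c / 2` for all `P ∈ 𝔓`
simultaneously. Discarding `O` then leaves `P (X < -δ)`, and hence `1 - P (X ≥ -δ)`, bounded
below by `c / 2 - v(O) > 0`.
-/

open MeasureTheory Set
open scoped NNReal

theorem ContinuousOn.isOpen_union_preimage {α β : Type*} [TopologicalSpace α]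
    [TopologicalSpace β] {f : α → β} {O : Set α} {U : Set β} (hO : IsOpen O)
    (hf : ContinuousOn f Oᶜ) (hU : IsOpen U) : IsOpen (O ∪ f ⁻¹' U) := by
  rw [← isClosed_compl_iff, compl_union, ← preimage_compl]
  exact hf.preimage_isClosed_of_isClosed hO.isClosed_compl hU.isClosed_compl

namespace MeasureTheory.ProbabilityMeasure

variable {Ω : Type*} [MeasurableSpace Ω]

theorem apply_add_apply_le_one_add_of_inter_subset (P : ProbabilityMeasure Ω) {A G O : Set Ω}
    (hG : MeasurableSet G) (hAG : A ∩ G ⊆ O) : P A + P G ≤ 1 + P O := by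
  have hP : P Gᶜ + P G = 1 := by
    apply ENNReal.coe_injective
    simpa [add_comm] using prob_add_prob_compl (μ := (P : Measure Ω)) hG
  calc P A + P G ≤ P (O ∪ Gᶜ) + P G := by
        gcongr
        intro ω hω
        by_cases hωG : ω ∈ G
        · exact Or.inl (hAG ⟨hω, hωG⟩)
        · exact Or.inr hωG
    _ ≤ P O + P Gᶜ + P G := by gcongr; exact P.apply_union_le
    _ = 1 + P O := by rw [add_assoc, hP, add_comm]

variable [TopologicalSpace Ω] [OpensMeasurableSpace Ω] [HasOuterApproxClosed Ω]

theorem lowerSemicontinuous_apply_of_isOpen {G : Set Ω} (hG : IsOpen G) :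
    LowerSemicontinuous fun P : ProbabilityMeasure Ω => P G := by
  intro P a ha
  have hlim := le_liminf_measure_open_of_tendsto (μ := P) Filter.tendsto_id hG
  rw [← ennreal_coeFn_eq_coeFn_toMeasure] at hlim
  filter_upwards [Filter.eventually_lt_of_lt_liminf ((ENNReal.coe_lt_coe.2 ha).trans_le hlim)]
    with Q hQ
  rwa [← ennreal_coeFn_eq_coeFn_toMeasure, ENNReal.coe_lt_coe] at hQ

theorem _root_.IsCompact.exists_forall_lt_apply_of_directed {ι : Type*} [Countable ι]
    [Nonempty ι] {K : Set (ProbabilityMeasure Ω)} (hK : IsCompact K) {G : ι → Set Ω}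
    (hGo : ∀ i, IsOpen (G i)) (hG : Directed (· ⊆ ·) G) {a : ℝ≥0}
    (ha : ∀ P ∈ K, a < P (⋃ i, G i)) : ∃ i, ∀ P ∈ K, a < P (G i) := by
  have hcover : K ⊆ ⋃ i, {P : ProbabilityMeasure Ω | a < P (G i)} := fun P hP => by
    have hsup := ENNReal.coe_lt_coe.2 (ha P hP)
    rw [ennreal_coeFn_eq_coeFn_toMeasure, hG.measure_iUnion, lt_iSup_iff] at hsup
    obtain ⟨i, hi⟩ := hsup
    rw [← ennreal_coeFn_eq_coeFn_toMeasure, ENNReal.coe_lt_coe] at hi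
    exact mem_iUnion.2 ⟨i, hi⟩
  refine hK.elim_directed_cover _
    (fun i => (lowerSemicontinuous_apply_of_isOpen (hGo i)).isOpen_preimage a) hcover ?_
  exact hG.mono_comp (· ⊆ ·) (g := fun S => {P : ProbabilityMeasure Ω | a < P S})
    fun S T hST P (hP : a < P S) => hP.trans_le (apply_mono P hST)

theorem _root_.IsCompact.exists_pos_forall_lt_apply_union_of_continuousOn_compl
    {K : Set (ProbabilityMeasure Ω)} (hK : IsCompact K) {O : Set Ω} (hO : IsOpen O)
    {X : Ω → ℝ} (hX : ContinuousOn X Oᶜ) {a : ℝ≥0} (ha : ∀ P ∈ K, a < P {ω | X ω < 0}) :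
    ∃ δ : ℝ, 0 < δ ∧ ∀ P ∈ K, a < P (O ∪ {ω | X ω < -δ}) := by
  let G : ℕ → Set Ω := fun n => O ∪ X ⁻¹' Iio (-(n + 1 : ℝ)⁻¹)
  have hG : Monotone G := fun m n hmn => union_subset_union_right _ <| preimage_mono <|
    Iio_subset_Iio <| neg_le_neg <| by gcongr
  have hneg : {ω | X ω < 0} ⊆ ⋃ n, G n := fun ω (hω : X ω < 0) => by
    obtain ⟨n, hn⟩ := exists_nat_one_div_lt (neg_pos.2 hω)
    rw [one_div] at hn
    exact mem_iUnion.2 ⟨n, Or.inr (lt_neg_of_lt_neg hn)⟩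
  obtain ⟨N, hN⟩ := hK.exists_forall_lt_apply_of_directed
    (fun n => hX.isOpen_union_preimage hO isOpen_Iio) hG.directed_le
    fun P hP => (ha P hP).trans_le (apply_mono P hneg)
  exact ⟨(N + 1 : ℝ)⁻¹, by positivity, hN⟩

end MeasureTheory.ProbabilityMeasure

theorem exists_delta_capacity_lt_one_general
    {Ω : Type*} [TopologicalSpace Ω] [PolishSpace Ω] [MeasurableSpace Ω] [BorelSpace Ω]
    (𝔓 : Set (ProbabilityMeasure Ω)) (h𝔓cpt : IsCompact 𝔓)
    (X : Ω → ℝ)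
    (hqc : ∀ ε : ℝ≥0, 0 < ε → ∃ O : Set Ω, IsOpen O ∧
      (⨆ P : 𝔓, (P : ProbabilityMeasure Ω) O) < ε ∧ ContinuousOn X Oᶜ)
    (hinf : 0 < ⨅ P : 𝔓, (P : ProbabilityMeasure Ω) {ω | X ω < 0}) :
    ∃ δ : ℝ, 0 < δ ∧ (⨆ P : 𝔓, (P : ProbabilityMeasure Ω) {ω | -δ ≤ X ω}) < 1 := by
  set c := ⨅ P : 𝔓, (P : ProbabilityMeasure Ω) {ω | X ω < 0}
  obtain ⟨O, hO, hvO, hXO⟩ := hqc (c / 2) (half_pos hinf)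
  set vO := ⨆ P : 𝔓, (P : ProbabilityMeasure Ω) O
  obtain ⟨δ, hδ, hmass⟩ :=
    h𝔓cpt.exists_pos_forall_lt_apply_union_of_continuousOn_compl hO hXO fun P hP =>
      (half_lt_self hinf).trans_le (ciInf_le (OrderBot.bddBelow _) (⟨P, hP⟩ : 𝔓))
  have hbound (P : 𝔓) : (P : ProbabilityMeasure Ω) {ω | -δ ≤ X ω} + (c / 2 - vO) ≤ 1 := by
    have hPO : (P : ProbabilityMeasure Ω) O ≤ vO :=
      le_ciSup (f := fun P : 𝔓 => (P : ProbabilityMeasure Ω) O)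
        ⟨1, forall_mem_range.2 fun _ => ProbabilityMeasure.apply_le_one _ _⟩ P
    have hsplit := (P : ProbabilityMeasure Ω).apply_add_apply_le_one_add_of_inter_subset
      (A := {ω | -δ ≤ X ω}) ((hXO.isOpen_union_preimage hO isOpen_Iio).measurableSet)
      fun ω ⟨hω, hωG⟩ => hωG.resolve_right fun (h : X ω < -δ) => not_lt.2 hω h
    refine le_of_add_le_add_right (a := vO) ?_
    calc _ = (P : ProbabilityMeasure Ω) {ω | -δ ≤ X ω} + c / 2 := by
          rw [add_assoc, tsub_add_cancel_of_le hvO.le]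
      _ ≤ 1 + (P : ProbabilityMeasure Ω) O :=
          (add_lt_add_right (hmass P P.2) _).le.trans hsplit
      _ ≤ 1 + vO := by gcongr
  exact ⟨δ, hδ, (ciSup_le' fun P => le_tsub_of_add_le_right (hbound P)).trans_lt
    (tsub_lt_self one_pos (tsub_pos_of_lt hvO))⟩

/-- **Key intermediate step in the proof of Theorem 3.1.**
Let `Ω` be a Polish space and `𝔓` a nonempty weakly compact set of Borel probability measures
on `Ω`.  If `X : Ω → ℝ` is Borel measurable, quasi-continuous, and
`inf_{P ∈ 𝔓} P(X < 0) > 0`, then there is `δ > 0` with `sup_{P ∈ 𝔓} P(X ≥ -δ) < 1`. -/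
theorem exists_delta_capacity_lt_one
    {Ω : Type*} [TopologicalSpace Ω] [PolishSpace Ω] [MeasurableSpace Ω] [BorelSpace Ω]
    (𝔓 : Set (ProbabilityMeasure Ω)) (h𝔓ne : 𝔓.Nonempty) (h𝔓cpt : IsCompact 𝔓)
    (X : Ω → ℝ) (hXmeas : Measurable X)
    (hqc : ∀ ε : ℝ≥0, 0 < ε → ∃ O : Set Ω, IsOpen O ∧
      (⨆ P : 𝔓, (P : ProbabilityMeasure Ω) O) < ε ∧ ContinuousOn X Oᶜ)
    (hinf : 0 < ⨅ P : 𝔓, (P : ProbabilityMeasure Ω) {ω | X ω < 0}) :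
    ∃ δ : ℝ, 0 < δ ∧ (⨆ P : 𝔓, (P : ProbabilityMeasure Ω) {ω | -δ ≤ X ω}) < 1 :=
  exists_delta_capacity_lt_one_general 𝔓 h𝔓cpt X hqc hinf
end
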